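/- arXiv:2309.01556 — 2 statements merged into one kernel-verified Lean document; each statement's English description precedes it below -/
import Mathlib

section
/- Let A = {0,1}, k = 2k'+1 odd, n ≥ k+1, n0 = n−k+1, and J = {n0, n0+2, …, n−2, n}. Let φ be the map on pairs in [0,7] × A^2 defined by φ(0,11) = (1,01), φ(1,10) = (2,11), φ(2,00) = (3,10), φ(3,01) = (4,10), φ(4,01) = (5,11), φ(5,00) = (6,01), φ(6,10) = (7,00), φ(7,11) = (0,00). For every i ∈ [1, 2^n−1] and every j ∈ J with j ≠ n0: if i is not divisible by 2^{j−2} then (Q^{[j]}_{[i]}, C^{[j]}_{[i]}) = (Q^{[j]}_{[i−1]}, θ(C^{[j]}_{[i−1]})), and if i is divisible by 2^{j−2} then (Q^{[j]}_{[i]}, C^{[j]}_{[i]}) = φ(Q^{[j]}_{[i−1]}, C^{[j]}_{[i−1]}). -/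
/-!
Unwinding the recursion defining `γ^{n,k}`, the factor `C^{[j]}_{[i]}` is `θ^i` applied to the
two-letter prefix of the inductive step at level `j - 2`, taken from the `γ` or the `ρ` rule
according to bit `j` of `i` and indexed by bits `j - 1, j - 2` of `i`. Both choices are read
off `Q^{[j]}_{[i]} = ⌊i / 2^{j-2}⌋ mod 8`. From `i - 1` to `i`, the parity of `i` changes and
`Q` stays the same unless `2^{j-2}` divides `i`, in which case `i` is even and `Q` increases by
one modulo `8`; what remains is to check the eight values of `φ`.
-/

/-- Hamming distance between two words (lists) of the same length:
the number of positions in which they differ. -/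
def hammingL {α : Type*} [DecidableEq α] (w w' : List α) : ℕ :=
  ((w.zip w').filter fun q => decide (q.1 ≠ q.2)).length

/-- `w` (restricted to indices `< N`) is a `σ_k`-Gray cycle over `X`:
its terms are pairwise distinct and enumerate `X` (a bijection from `[0, N-1]` onto `X`),
two consecutive terms have the same length and Hamming distance exactly `k`, and so do
the first and the last term. -/
def IsGrayCycleOn {α : Type*} [DecidableEq α] (k N : ℕ) (w : ℕ → List α)
    (X : Set (List α)) : Prop :=
  Set.BijOn w (Set.Iio N) X ∧
  (∀ i, 1 ≤ i → i < N →
    (w (i - 1)).length = (w i).length ∧ hammingL (w (i - 1)) (w i) = k) ∧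
  (0 < N → (w (N - 1)).length = (w 0).length ∧ hammingL (w (N - 1)) (w 0) = k)

/-- The bit complement `θ : 0 ↔ 1` on the binary alphabet `{0,1}`. -/
def cpl (x : Fin 2) : Fin 2 := x + 1

/-- The bit complement extended letterwise to binary words. -/
def cplW (w : List (Fin 2)) : List (Fin 2) := w.map cpl

/-- The reflected binary Gray code `g^{m,1}` over words of length `m`:
`g^{0,1} = (ε)` and `g^{m+1,1} = (0·g^{m,1}, 1·(g^{m,1})^R)`. -/
def binGray : ℕ → List (List (Fin 2))
  | 0 => [[]]
  | m + 1 =>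
      (binGray m).map (fun w => 0 :: w) ++ (binGray m).reverse.map (fun w => 1 :: w)

/-- The sequence `γ^{n0,1}`: `γ^{n0,1}_{[0]} = g^{n0,1}_{[0]}` and
`γ^{n0,1}_{[i]} = g^{n0,1}_{[2^{n0} - i]}` for `1 ≤ i ≤ 2^{n0} - 1`. -/
def gamma1 (n0 i : ℕ) : List (Fin 2) :=
  if i = 0 then (binGray n0).getD 0 [] else (binGray n0).getD (2 ^ n0 - i) []

/-- The sequence `ρ^{n0,1}`: `ρ^{n0,1}_{[0]} = g^{n0,1}_{[2^{n0}-1]}` and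
`ρ^{n0,1}_{[i]} = g^{n0,1}_{[i-1]}` for `1 ≤ i ≤ 2^{n0} - 1`. -/
def rho1 (n0 i : ℕ) : List (Fin 2) :=
  if i = 0 then (binGray n0).getD (2 ^ n0 - 1) [] else (binGray n0).getD (i - 1) []

/-- `grSeq n0 true t i` (resp. `grSeq n0 false t i`) is the term of index `i` of the
sequence `γ^{n0+2t, 2t+1}` (resp. `ρ^{n0+2t, 2t+1}`), built inductively: the base cases
are `γ^{n0,1}` and `ρ^{n0,1}`, and, writing `i = q·2^m + r` with `m = n0 + 2t` and
`r < 2^m`, `γ^{m+2, (2t+1)+2}_{[i]}` is `θ^r(00)·γ^{m,2t+1}_{[r]}`, `θ^r(01)·ρ^{m,2t+1}_{[r]}`,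
`θ^r(11)·γ^{m,2t+1}_{[r]}`, `θ^r(10)·ρ^{m,2t+1}_{[r]}` according to `q = 0, 1, 2, 3`, and
`ρ^{m+2, (2t+1)+2}_{[i]}` is `θ^r(10)·γ^{m,2t+1}_{[r]}`, `θ^r(11)·ρ^{m,2t+1}_{[r]}`,
`θ^r(01)·γ^{m,2t+1}_{[r]}`, `θ^r(00)·ρ^{m,2t+1}_{[r]}` according to `q = 0, 1, 2, 3`. -/
def grSeq (n0 : ℕ) : Bool → ℕ → ℕ → List (Fin 2)
  | b, 0, i => if b then gamma1 n0 i else rho1 n0 i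
  | b, t + 1, i =>
      cplW^[i % 2 ^ (n0 + 2 * t)]
        (if b then
          (if i / 2 ^ (n0 + 2 * t) = 0 then [0, 0]
           else if i / 2 ^ (n0 + 2 * t) = 1 then [0, 1]
           else if i / 2 ^ (n0 + 2 * t) = 2 then [1, 1] else [1, 0])
         else
          (if i / 2 ^ (n0 + 2 * t) = 0 then [1, 0]
           else if i / 2 ^ (n0 + 2 * t) = 1 then [1, 1]
           else if i / 2 ^ (n0 + 2 * t) = 2 then [0, 1] else [0, 0])) ++
        grSeq n0 (i / 2 ^ (n0 + 2 * t) % 2 == 0) t (i % 2 ^ (n0 + 2 * t))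

/-- For odd `k` and `n ≥ k + 1`, `gammaNK n k i` is the term `γ^{n,k}_{[i]}`
(here `n0 = n - k + 1` and `k = 2·(k/2) + 1`). -/
def gammaNK (n k i : ℕ) : List (Fin 2) := grSeq (n + 1 - k) true (k / 2) i

/-- For odd `k` and `n ≥ k + 1`, `rhoNK n k i` is the term `ρ^{n,k}_{[i]}`. -/
def rhoNK (n k i : ℕ) : List (Fin 2) := grSeq (n + 1 - k) false (k / 2) i

/-- The map `φ` on pairs in `[0,7] × A²` defined by `φ(0,11) = (1,01)`,
`φ(1,10) = (2,11)`, `φ(2,00) = (3,10)`, `φ(3,01) = (4,10)`, `φ(4,01) = (5,11)`,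
`φ(5,00) = (6,01)`, `φ(6,10) = (7,00)`, `φ(7,11) = (0,00)`. -/
def phiMap (x : ℕ × List (Fin 2)) : ℕ × List (Fin 2) :=
  if x = (0, [1, 1]) then (1, [0, 1])
  else if x = (1, [1, 0]) then (2, [1, 1])
  else if x = (2, [0, 0]) then (3, [1, 0])
  else if x = (3, [0, 1]) then (4, [1, 0])
  else if x = (4, [0, 1]) then (5, [1, 1])
  else if x = (5, [0, 0]) then (6, [0, 1])
  else if x = (6, [1, 0]) then (7, [0, 0])
  else if x = (7, [1, 1]) then (0, [0, 0])
  else x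

theorem Function.Involutive.iterate_mod_two_pow {α : Type*} {f : α → α}
    (hf : Function.Involutive f) {m : ℕ} (hm : m ≠ 0) (r : ℕ) : f^[r % 2 ^ m] = f^[r] := by
  obtain ⟨c, hc⟩ : 2 ∣ 2 ^ m := dvd_pow_self 2 hm
  rw [hc]
  conv_rhs => rw [← Nat.mod_add_div r (2 * c), Function.iterate_add, mul_assoc,
    hf.iterate_two_mul, Function.comp_id]

theorem cplW_involutive : Function.Involutive cplW := fun w => by
  simp only [cplW, List.map_map]
  exact List.map_id'' (fun x => by fin_cases x <;> rfl) w

theorem length_cplW_iterate (r : ℕ) (w : List (Fin 2)) : (cplW^[r] w).length = w.length := by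
  induction r with
  | zero => rfl
  | succ r ih => rw [Function.iterate_succ_apply', cplW, List.length_map, ih]

def grPrefix (b : Bool) (q : ℕ) : List (Fin 2) :=
  if b then
    (if q = 0 then [0, 0] else if q = 1 then [0, 1] else if q = 2 then [1, 1] else [1, 0])
  else
    (if q = 0 then [1, 0] else if q = 1 then [1, 1] else if q = 2 then [0, 1] else [0, 0])

theorem length_grPrefix (b : Bool) (q : ℕ) : (grPrefix b q).length = 2 := by
  unfold grPrefix; split_ifs <;> rfl

section grSeq

variable {n0 : ℕ}

theorem grSeq_succ (b : Bool) (t i : ℕ) :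
    grSeq n0 b (t + 1) i =
      cplW^[i % 2 ^ (n0 + 2 * t)] (grPrefix b (i / 2 ^ (n0 + 2 * t))) ++
        grSeq n0 (i / 2 ^ (n0 + 2 * t) % 2 == 0) t (i % 2 ^ (n0 + 2 * t)) := rfl

theorem drop_grSeq_succ (b : Bool) (t i : ℕ) :
    (grSeq n0 b (t + 1) i).drop 2 =
      grSeq n0 (i / 2 ^ (n0 + 2 * t) % 2 == 0) t (i % 2 ^ (n0 + 2 * t)) := by
  rw [grSeq_succ]
  exact List.drop_left' (by rw [length_cplW_iterate, length_grPrefix])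

theorem take_two_grSeq_succ (hn0 : 1 ≤ n0) (b : Bool) (t i : ℕ) :
    (grSeq n0 b (t + 1) i).take 2 = cplW^[i] (grPrefix b (i / 2 ^ (n0 + 2 * t))) := by
  rw [grSeq_succ, List.take_left' (by rw [length_cplW_iterate, length_grPrefix]),
    cplW_involutive.iterate_mod_two_pow (by omega)]

theorem drop_grSeq_of_lt (b : Bool) {s t : ℕ} (hst : s < t) (i : ℕ) :
    (grSeq n0 b t i).drop (2 * (t - s)) =
      grSeq n0 (i / 2 ^ (n0 + 2 * s) % 2 == 0) s (i % 2 ^ (n0 + 2 * s)) := by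
  induction t generalizing b i with
  | zero => omega
  | succ t ih =>
    rw [show 2 * (t + 1 - s) = 2 + 2 * (t - s) by omega, ← List.drop_drop, drop_grSeq_succ]
    rcases Nat.lt_succ_iff_lt_or_eq.mp hst with hlt | rfl
    · have hle : n0 + 2 * s ≤ n0 + 2 * t := by omega
      have hsplit : (2 : ℕ) ^ (n0 + 2 * t) =
          2 ^ (n0 + 2 * s) * 2 ^ (n0 + 2 * t - (n0 + 2 * s)) := by
        rw [← pow_add, Nat.add_sub_cancel' hle]
      rw [ih _ hlt, Nat.mod_mod_of_dvd _ (pow_dvd_pow 2 hle), hsplit,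
        Nat.mod_mul_right_div_self, Nat.mod_mod_of_dvd _ (dvd_pow_self 2 (by omega))]
    · rw [Nat.sub_self, mul_zero, List.drop_zero]

theorem drop_grSeq_true {s t i : ℕ} (hst : s ≤ t) (hi : i < 2 ^ (n0 + 2 * t)) :
    (grSeq n0 true t i).drop (2 * (t - s)) =
      grSeq n0 (i / 2 ^ (n0 + 2 * s) % 2 == 0) s (i % 2 ^ (n0 + 2 * s)) := by
  rcases hst.lt_or_eq with hlt | rfl
  · exact drop_grSeq_of_lt true hlt i
  · simp [Nat.div_eq_of_lt hi, Nat.mod_eq_of_lt hi]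

end grSeq

/-- `C^{[j]}_{[i]} = θ^i(blockFactor Q^{[j]}_{[i]})`. -/
def blockFactor (Q : ℕ) : List (Fin 2) := grPrefix (decide (Q < 4)) (Q % 4)

theorem mod_pow_succ_div_pow_sub_two {j : ℕ} (hj : 2 ≤ j) (i : ℕ) :
    i % 2 ^ (j + 1) / 2 ^ (j - 2) = i / 2 ^ (j - 2) % 8 := by
  rw [show j + 1 = (j - 2) + 3 by omega, pow_add, Nat.mod_mul_right_div_self]
  rfl

theorem grPrefix_eq_blockFactor {j : ℕ} (hj : 2 ≤ j) (i : ℕ) :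
    grPrefix (i / 2 ^ j % 2 == 0) (i % 2 ^ j / 2 ^ (j - 2)) =
      blockFactor (i % 2 ^ (j + 1) / 2 ^ (j - 2)) := by
  have h4 : (2 : ℕ) ^ j = 2 ^ (j - 2) * 4 := by
    rw [show j = (j - 2) + 2 by omega, pow_add]; rfl
  rw [blockFactor, mod_pow_succ_div_pow_sub_two hj, h4, Nat.mod_mul_right_div_self,
    ← Nat.div_div_eq_div_mul]
  generalize i / 2 ^ (j - 2) = X
  congr 1
  · simp only [Bool.beq_eq_decide_eq, decide_eq_decide]; omega
  · omega

theorem take_two_drop_gammaNK {n k j i : ℕ} (hk : Odd k) (hn : k + 1 ≤ n)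
    (hj1 : n - k + 1 < j) (hj2 : j ≤ n) (hjpar : (j - (n - k + 1)) % 2 = 0) (hi : i < 2 ^ n) :
    ((gammaNK n k i).drop (n - j)).take 2 =
      cplW^[i] (blockFactor (i % 2 ^ (j + 1) / 2 ^ (j - 2))) := by
  obtain ⟨t, rfl⟩ := hk
  obtain ⟨s, hs⟩ : ∃ s, j = (n + 1 - (2 * t + 1)) + 2 * (s + 1) :=
    ⟨(j - (n - 2 * t)) / 2 - 1, by omega⟩
  set n0 := n + 1 - (2 * t + 1)
  have hn' : n = n0 + 2 * t := by omega
  have hst : s + 1 ≤ t := by omega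
  have hsub : n - j = 2 * (t - (s + 1)) := by omega
  have hj' : j - 2 = n0 + 2 * s := by omega
  rw [gammaNK, show (2 * t + 1) / 2 = t by omega, hsub, drop_grSeq_true hst (hn' ▸ hi),
    take_two_grSeq_succ (by omega), cplW_involutive.iterate_mod_two_pow (by omega), ← hs, ← hj',
    grPrefix_eq_blockFactor (by omega)]

theorem phiMap_blockFactor {Q : ℕ} (hQ : Q < 8) :
    ((Q + 1) % 8, blockFactor ((Q + 1) % 8)) = phiMap (Q, cplW (blockFactor Q)) := by
  interval_cases Q <;> decide

theorem statement12_general (n k : ℕ) (hk : Odd k) (hn : k + 1 ≤ n) :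
    ∀ j, n - k + 1 < j → j ≤ n → (j - (n - k + 1)) % 2 = 0 →
    ∀ i, 1 ≤ i → i < 2 ^ n →
      (¬ 2 ^ (j - 2) ∣ i →
        (i % 2 ^ (j + 1) / 2 ^ (j - 2),
            ((gammaNK n k i).drop (n - j)).take 2) =
          ((i - 1) % 2 ^ (j + 1) / 2 ^ (j - 2),
            cplW (((gammaNK n k (i - 1)).drop (n - j)).take 2))) ∧
      (2 ^ (j - 2) ∣ i →
        (i % 2 ^ (j + 1) / 2 ^ (j - 2),
            ((gammaNK n k i).drop (n - j)).take 2) =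
          phiMap ((i - 1) % 2 ^ (j + 1) / 2 ^ (j - 2),
            ((gammaNK n k (i - 1)).drop (n - j)).take 2)) := by
  intro j hj1 hj2 hjpar i hi1 hi
  obtain ⟨i, rfl⟩ : ∃ i', i = i' + 1 := ⟨i - 1, by omega⟩
  have hj : 2 ≤ j := by omega
  rw [Nat.add_sub_cancel, take_two_drop_gammaNK hk hn hj1 hj2 hjpar hi,
    take_two_drop_gammaNK hk hn hj1 hj2 hjpar (by omega), mod_pow_succ_div_pow_sub_two hj,
    mod_pow_succ_div_pow_sub_two hj]
  refine ⟨fun hndvd => ?_, fun hdvd => ?_⟩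
  · rw [Nat.succ_div_of_not_dvd hndvd, Function.iterate_succ_apply']
  · have heven : Even (i + 1) :=
      even_iff_two_dvd.mpr ((dvd_pow_self 2 (by omega)).trans hdvd)
    rw [Nat.succ_div_of_dvd hdvd, cplW_involutive.iterate_even heven,
      cplW_involutive.iterate_odd (Nat.not_even_iff_odd.mp (Nat.even_add_one.mp heven)),
      Nat.add_mod _ 1 8]
    exact phiMap_blockFactor (Nat.mod_lt _ (by norm_num))

/-- Let `k` be odd, `n ≥ k + 1`, `n0 = n - k + 1`, and `J = {n0, n0+2, …, n-2, n}`.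
For `j ∈ J` with `j ≠ n0`, writing `μ(i,j) = i mod 2^{j+1}`,
`Q^{[j]}_{[i]} = ⌊μ(i,j)/2^{j-2}⌋`, and `C^{[j]}_{[i]}` the two-letter factor of
`γ^{n,k}_{[i]}` in positions `j, j-1` from the right: if `2^{j-2}` does not divide `i`
then `(Q^{[j]}_{[i]}, C^{[j]}_{[i]}) = (Q^{[j]}_{[i-1]}, θ(C^{[j]}_{[i-1]}))`, and if
`2^{j-2}` divides `i` then
`(Q^{[j]}_{[i]}, C^{[j]}_{[i]}) = φ(Q^{[j]}_{[i-1]}, C^{[j]}_{[i-1]})`. -/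
theorem statement12 (n k : ℕ) (hk1 : 1 ≤ k) (hk : Odd k) (hn : k + 1 ≤ n) :
    ∀ j, n - k + 1 < j → j ≤ n → (j - (n - k + 1)) % 2 = 0 →
    ∀ i, 1 ≤ i → i < 2 ^ n →
      (¬ 2 ^ (j - 2) ∣ i →
        (i % 2 ^ (j + 1) / 2 ^ (j - 2),
            ((gammaNK n k i).drop (n - j)).take 2) =
          ((i - 1) % 2 ^ (j + 1) / 2 ^ (j - 2),
            cplW (((gammaNK n k (i - 1)).drop (n - j)).take 2))) ∧
      (2 ^ (j - 2) ∣ i →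
        (i % 2 ^ (j + 1) / 2 ^ (j - 2),
            ((gammaNK n k i).drop (n - j)).take 2) =
          phiMap ((i - 1) % 2 ^ (j + 1) / 2 ^ (j - 2),
            ((gammaNK n k (i - 1)).drop (n - j)).take 2)) :=
  statement12_general n k hk hn
end

section
/- Let A = {0,1}, let n ≥ 1, and let k be a positive even integer. If a σ_k-Gray cycle exists over a set X ⊆ {0,1}^n, then |X| ≤ 2^{n−1}. -/
/-- `w` (restricted to indices `< N`, where `N = |X|`) is a `σ_k`-Gray cycle over the
finite set of words `X`: the terms lie in `X`, enumerate all of `X`, are pairwise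
distinct, two consecutive terms have the same length and Hamming distance exactly `k`,
and so do the first and the last term. -/
def IsSigmaGrayCycle {α : Type*} [DecidableEq α] (k N : ℕ) (w : ℕ → List α)
    (X : Finset (List α)) : Prop :=
  N = X.card ∧
  (∀ i, i < N → w i ∈ X) ∧
  (∀ x ∈ X, ∃ i, i < N ∧ w i = x) ∧
  (∀ i, i < N → ∀ j, j < N → w i = w j → i = j) ∧
  (∀ i, 1 ≤ i → i < N →
    (w (i - 1)).length = (w i).length ∧ hammingL (w (i - 1)) (w i) = k) ∧
  (0 < N → (w (N - 1)).length = (w 0).length ∧ hammingL (w (N - 1)) (w 0) = k)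

/-!
A substitution of an even number of letters preserves the parity of the number of `1`s in a
binary word, so all terms of a `σ_k`-Gray cycle with `k` even have the same parity. A binary
word of length `n` is determined by its last `n - 1` letters together with this parity, which
leaves at most `2 ^ (n - 1)` words.
-/

lemma hammingL_cons {α : Type*} [DecidableEq α] (a b : α) (t t' : List α) :
    hammingL (a :: t) (b :: t') = (if a = b then 0 else 1) + hammingL t t' := by
  by_cases hab : a = b <;> simp [hammingL, hab, Nat.add_comm]

lemma count_one_add_hammingL_mod_two :
    ∀ {w w' : List (Fin 2)}, w.length = w'.length →
      (w.count 1 + hammingL w w') % 2 = w'.count 1 % 2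
  | [], [], _ => by simp [hammingL]
  | a :: t, b :: t', hlen => by
    have ih := count_one_add_hammingL_mod_two (Nat.succ_injective hlen)
    rw [hammingL_cons, List.count_cons, List.count_cons]
    fin_cases a <;> fin_cases b <;> simp <;> omega

lemma count_one_mod_two_eq_of_even_hammingL {w w' : List (Fin 2)} (hlen : w.length = w'.length)
    (heven : Even (hammingL w w')) : w.count 1 % 2 = w'.count 1 % 2 := by
  have h := count_one_add_hammingL_mod_two hlen
  obtain ⟨m, hm⟩ := heven
  omega

lemma IsSigmaGrayCycle.count_one_mod_two_eq {k N : ℕ} {w : ℕ → List (Fin 2)}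
    {X : Finset (List (Fin 2))} (h : IsSigmaGrayCycle k N w X) (hk : Even k)
    {x y : List (Fin 2)} (hx : x ∈ X) (hy : y ∈ X) : x.count 1 % 2 = y.count 1 % 2 := by
  obtain ⟨-, -, hsurj, -, hstep, -⟩ := h
  have hterm : ∀ i, i < N → (w i).count 1 % 2 = (w 0).count 1 % 2 := by
    intro i
    induction i with
    | zero => intro _; rfl
    | succ i ih =>
      intro hi
      obtain ⟨hlen, hdist⟩ := hstep (i + 1) (by omega) hi
      rw [← ih (by omega)]
      exact (count_one_mod_two_eq_of_even_hammingL hlen (hdist ▸ hk)).symm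
  obtain ⟨i, hi, rfl⟩ := hsurj x hx
  obtain ⟨j, hj, rfl⟩ := hsurj y hy
  rw [hterm i hi, hterm j hj]

lemma eq_of_tail_eq_of_count_one_mod_two_eq :
    ∀ {x y : List (Fin 2)}, x.length = y.length → x.tail = y.tail →
      x.count 1 % 2 = y.count 1 % 2 → x = y
  | [], [], _, _, _ => rfl
  | a :: t, b :: _, _, rfl, hpar => by
    rw [List.count_cons, List.count_cons] at hpar
    fin_cases a <;> fin_cases b <;> simp at hpar ⊢ <;> omega

lemma card_le_two_pow_pred_of_count_one_mod_two_eq {n : ℕ} {X : Finset (List (Fin 2))}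
    (hX : ∀ w ∈ X, w.length = n)
    (hpar : ∀ x ∈ X, ∀ y ∈ X, x.count 1 % 2 = y.count 1 % 2) :
    X.card ≤ 2 ^ (n - 1) := by
  let words : Finset (List (Fin 2)) :=
    (Finset.univ : Finset (List.Vector (Fin 2) (n - 1))).image Subtype.val
  have hmaps : Set.MapsTo List.tail X words := fun w hw =>
    Finset.mem_image_of_mem Subtype.val
      (@Finset.mem_univ (List.Vector (Fin 2) (n - 1)) _ ⟨w.tail, by simp [hX w hw]⟩)
  have hinj : Set.InjOn List.tail X := fun x hx y hy htail =>
    eq_of_tail_eq_of_count_one_mod_two_eq ((hX x hx).trans (hX y hy).symm) htail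
      (hpar x hx y hy)
  calc X.card ≤ words.card := Finset.card_le_card_of_injOn _ hmaps hinj
    _ ≤ Fintype.card (List.Vector (Fin 2) (n - 1)) := Finset.card_image_le
    _ = 2 ^ (n - 1) := by simp [card_vector]

theorem statement15_general (n k N : ℕ) (hke : Even k)
    (X : Finset (List (Fin 2))) (hX : ∀ w ∈ X, w.length = n)
    (α : ℕ → List (Fin 2)) (h : IsSigmaGrayCycle k N α X) :
    X.card ≤ 2 ^ (n - 1) :=
  card_le_two_pow_pred_of_count_one_mod_two_eq hX fun _ hx _ hy =>
    h.count_one_mod_two_eq hke hx hy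

/-- For `k` even and positive, if a `σ_k`-Gray cycle exists over a set
`X ⊆ {0,1}^n`, then `|X| ≤ 2^{n-1}`. -/
theorem statement15 (n k N : ℕ) (hn : 1 ≤ n) (hk : 0 < k) (hke : Even k)
    (X : Finset (List (Fin 2))) (hX : ∀ w ∈ X, w.length = n)
    (α : ℕ → List (Fin 2)) (h : IsSigmaGrayCycle k N α X) :
    X.card ≤ 2 ^ (n - 1) :=
  statement15_general n k N hke X hX α h
end
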